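/- arXiv:math/9912127 — 2 statements merged into one kernel-verified Lean document; each statement's English description precedes it below -/
import Mathlib

section
/- Let (R,B,L) satisfy: R expansive d×d real matrix, #B = #L = N, (R^n b)·l ∈ ℤ for all n ∈ ℕ, b ∈ B, l ∈ L, and the matrix H = N^{-1/2}(e^{2πi b·l})_{b∈B, l∈L} is unitary. Let μ be the self-similar measure for (R,B) and ℒ = {Σ_{k=0}^n (R*)^k l_k : n ∈ ℕ, l_k ∈ L} with 0 ∈ L. Then the exponentials {e_λ(x) = e^{2πi λ·x} : λ ∈ ℒ} form an orthonormal family in L²(μ). -/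
open MeasureTheory Matrix Real ENNReal

noncomputable section

variable {d : ℕ}

abbrev E (d : ℕ) := EuclideanSpace ℝ (Fin d)

/-- A real matrix is expansive if all its (complex) eigenvalues have modulus `> 1`. -/
def IsExpansive (R : Matrix (Fin d) (Fin d) ℝ) : Prop :=
  ∀ z ∈ spectrum ℂ (R.map (Complex.ofReal)), 1 < ‖z‖

/-- The exponential `e_λ(x) = e^{2πi λ·x}`. -/
def eexp (lam x : E d) : ℂ := Complex.exp (2 * π * Complex.I * (inner ℝ lam x : ℝ))

/-- `χ_B(t) = N⁻¹ ∑_{b∈B} e^{2πi b·t}`. -/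
def chiB (B : Finset (E d)) (t : E d) : ℂ := (B.card : ℂ)⁻¹ * ∑ b ∈ B, eexp b t

/-- The Fourier transform `μ̂(t) = ∫ e^{-2πi t·x} dμ(x)`. -/
def muHat (μ : Measure (E d)) (t : E d) : ℂ := ∫ x, (starRingEnd ℂ) (eexp t x) ∂μ

/-- `μ` is the self-similar probability measure of the system `(R, B)`:
`μ = N⁻¹ ∑_{b∈B} μ ∘ σ_b⁻¹` with `σ_b(x) = R⁻¹ x + b`. -/
def IsSelfSimilarMeasure (R : Matrix (Fin d) (Fin d) ℝ) (B : Finset (E d))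
    (μ : Measure (E d)) : Prop :=
  IsProbabilityMeasure μ ∧
    μ = (B.card : ℝ≥0∞)⁻¹ •
      ∑ b ∈ B, μ.map (fun (x : E d) => (show E d from WithLp.toLp 2 (R⁻¹.mulVec x)) + b)

/-- The compatibility condition `R^n b · l ∈ ℤ` for all `n ≥ 1`, `b ∈ B`, `l ∈ L`. -/
def Compatible (R : Matrix (Fin d) (Fin d) ℝ) (B L : Finset (E d)) : Prop :=
  ∀ n : ℕ, 1 ≤ n → ∀ b ∈ B, ∀ l ∈ L,
    ∃ m : ℤ, (inner ℝ (show E d from WithLp.toLp 2 ((R ^ n).mulVec b)) l : ℝ) = (m : ℝ)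

/-- The Hadamard condition: `N^{-1/2} (e^{2πi b·l})_{b∈B, l∈L}` is a unitary matrix. -/
def Hadamard (B L : Finset (E d)) : Prop :=
  letI : DecidableEq (E d) := Classical.decEq _
  let H : Matrix B L ℂ :=
    fun b l => ((Real.sqrt B.card : ℝ) : ℂ)⁻¹ * eexp (b : E d) (l : E d)
  B.card = L.card ∧ H * H.conjTranspose = 1 ∧ H.conjTranspose * H = 1

/-- The dual lattice-like set `ℒ = {∑_{k=0}^n (R*)^k l_k : n ∈ ℕ, l_k ∈ L}`. -/
def LSet (R : Matrix (Fin d) (Fin d) ℝ) (L : Finset (E d)) : Set (E d) :=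
  {t | ∃ n : ℕ, ∃ l : ℕ → E d, (∀ k, l k ∈ L) ∧
    t = ∑ k ∈ Finset.range (n + 1), (show E d from WithLp.toLp 2 ((Rᵀ ^ k).mulVec (l k)))}

/-- The Ruelle transfer operator `(Cq)(t) = ∑_{l∈L} |χ_B(t−l)|² q((R*)⁻¹(t−l))`. -/
def ruelle (R : Matrix (Fin d) (Fin d) ℝ) (B L : Finset (E d))
    (q : E d → ℝ) (t : E d) : ℝ :=
  ∑ l ∈ L, ‖chiB B (t - l)‖ ^ 2 *
    q (show E d from WithLp.toLp 2 ((Rᵀ)⁻¹.mulVec (t - l)))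

/-- `Q(t) = ∑_{λ∈ℒ} |μ̂(t−λ)|²`. -/
def Qfun (R : Matrix (Fin d) (Fin d) ℝ) (L : Finset (E d))
    (μ : Measure (E d)) (t : E d) : ℝ :=
  ∑' lam : LSet R L, ‖muHat μ (t - lam)‖ ^ 2

/-- The attractor `X_ρ = {∑_{k=0}^∞ −(R*)^{-k} l_k : l_k ∈ L}`. -/
def attractorRho (R : Matrix (Fin d) (Fin d) ℝ) (L : Finset (E d)) : Set (E d) :=
  {x | ∃ l : ℕ → E d, (∀ k, l k ∈ L) ∧
    HasSum (fun k => -(show E d from WithLp.toLp 2 (((Rᵀ)⁻¹ ^ k).mulVec (l k)))) x}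

/-- The Lipschitz-type norm `‖q‖_{Y,∞} = sup_{y∈Y} |∇q(y)|₂`. -/
def YNorm (Y : Set (E d)) (q : E d → ℝ) : ℝ :=
  sSup ((fun y => ‖gradient q y‖) '' Y)

/-!
Since `μ` is a probability measure, `∫ conj e_λ · e_λ' dμ = conj μ̂(λ' - λ)`, so it suffices that
`μ̂` vanishes at the difference of two distinct points of `ℒ`. Self-similarity of `μ` gives
`μ̂(t) = conj χ_B(t) · μ̂((R*)⁻¹ t)`. Pad both points to digit expansions of the same length and
write `λ' - λ = (l'₀ - l₀) + R*(η' - η)`. If the lowest digits differ, compatibility makes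
`b · R*(η' - η)` an integer for every `b ∈ B`, so `χ_B(λ' - λ) = χ_B(l'₀ - l₀)`, which vanishes
because distinct columns of the Hadamard matrix are orthogonal. Otherwise
`μ̂(R*(η' - η)) = conj χ_B(R*(η' - η)) · μ̂(η' - η)` and we recurse on the shorter expansions.
-/

open scoped ComplexConjugate FourierTransform
open Filter

lemma eexp_eq_fourierChar (a x : E d) : eexp a x = 𝐞 (inner ℝ a x) := by
  rw [eexp, Real.fourierChar_apply]
  push_cast
  ring_nf

lemma eexp_comm (a x : E d) : eexp a x = eexp x a := by
  rw [eexp, eexp, real_inner_comm]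

lemma eexp_add_right (a x y : E d) : eexp a (x + y) = eexp a x * eexp a y := by
  rw [eexp_eq_fourierChar, inner_add_right, AddChar.map_add_eq_mul, Circle.coe_mul,
    ← eexp_eq_fourierChar, ← eexp_eq_fourierChar]

lemma conj_eexp (a x : E d) : conj (eexp a x) = eexp a (-x) := by
  rw [eexp_eq_fourierChar, eexp_eq_fourierChar, inner_neg_right, AddChar.map_neg_eq_inv,
    Circle.coe_inv_eq_conj]

lemma conj_eexp_mul_eexp (a a' x : E d) : conj (eexp a x) * eexp a' x = eexp (a' - a) x := by
  rw [eexp_comm a, conj_eexp, eexp_comm a', ← eexp_add_right, neg_add_eq_sub, eexp_comm]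

lemma norm_eexp (a x : E d) : ‖eexp a x‖ = 1 := by
  rw [eexp_eq_fourierChar, Circle.norm_coe]

lemma eexp_eq_one_of_inner_mem {a x : E d} (h : inner ℝ a x ∈ (Int.castAddHom ℝ).range) :
    eexp a x = 1 := by
  obtain ⟨m, hm⟩ := h
  rw [eexp_eq_fourierChar, ← hm, Int.coe_castAddHom, Real.fourierChar_apply',
    Circle.exp_two_pi_mul_int, Circle.coe_one]

lemma continuous_conj_eexp (a : E d) : Continuous fun x => conj (eexp a x) := by
  simp_rw [eexp_eq_fourierChar]
  fun_prop

lemma inner_toLpLin_left {m n : Type*} [Fintype m] [Fintype n] [DecidableEq m] [DecidableEq n]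
    (A : Matrix m n ℝ) (x : EuclideanSpace ℝ n) (y : EuclideanSpace ℝ m) :
    inner ℝ (A.toLpLin 2 2 x) y = inner ℝ x (Aᵀ.toLpLin 2 2 y) := by
  rw [← conjTranspose_eq_transpose_of_trivial, toEuclideanLin_conjTranspose_eq_adjoint A,
    LinearMap.adjoint_inner_right]

lemma eexp_toLpLin (A : Matrix (Fin d) (Fin d) ℝ) (t x : E d) :
    eexp t (A.toLpLin 2 2 x) = eexp (Aᵀ.toLpLin 2 2 t) x := by
  rw [eexp, eexp, real_inner_comm, inner_toLpLin_left, real_inner_comm]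

lemma isUnit_det_of_isExpansive {R : Matrix (Fin d) (Fin d) ℝ} (hR : IsExpansive R) :
    IsUnit R.det := by
  have hunit : IsUnit (Complex.ofRealHom.mapMatrix R) := by
    by_contra h
    exact absurd (hR 0 ((spectrum.zero_mem_iff ℂ).mpr h)) (by simp)
  rw [isUnit_iff_isUnit_det, ← RingHom.map_det] at hunit
  exact (isUnit_map_iff Complex.ofRealHom _).mp hunit

def digitSum (R : Matrix (Fin d) (Fin d) ℝ) (a : ℕ → E d) (n : ℕ) : E d :=
  ∑ k ∈ Finset.range n, (Rᵀ ^ k).toLpLin 2 2 (a k)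

lemma digitSum_succ (R : Matrix (Fin d) (Fin d) ℝ) (a : ℕ → E d) (n : ℕ) :
    digitSum R a (n + 1) = a 0 + Rᵀ.toLpLin 2 2 (digitSum R (fun k => a (k + 1)) n) := by
  simp_rw [digitSum, Finset.sum_range_succ', map_sum, toLpLin_pow, pow_zero, pow_succ',
    Module.End.one_apply, Module.End.mul_apply, add_comm]

lemma chiB_add_of_inner_mem {B : Finset (E d)} {s : E d}
    (hs : ∀ b ∈ B, inner ℝ b s ∈ (Int.castAddHom ℝ).range) (t : E d) :
    chiB B (t + s) = chiB B t := by
  rw [chiB, chiB]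
  congr 1
  refine Finset.sum_congr rfl fun b hb => ?_
  rw [eexp_add_right, eexp_eq_one_of_inner_mem (hs b hb), mul_one]

lemma Hadamard.chiB_sub_eq_zero {B L : Finset (E d)} (hHad : Hadamard B L) {l l' : E d}
    (hl : l ∈ L) (hl' : l' ∈ L) (hne : l ≠ l') : chiB B (l' - l) = 0 := by
  let : DecidableEq (E d) := Classical.decEq _
  let H : Matrix B L ℂ := Matrix.of fun b l => ((√B.card : ℝ) : ℂ)⁻¹ * eexp (b : E d) (l : E d)
  have hHH : Hᴴ * H = 1 := hHad.2.2
  have hentry := congrFun (congrFun hHH ⟨l, hl⟩) ⟨l', hl'⟩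
  rw [mul_apply, one_apply_ne (by simpa using hne)] at hentry
  rw [← hentry, chiB, ← Finset.sum_coe_sort B, Finset.mul_sum]
  refine Finset.sum_congr rfl fun b _ => ?_
  simp only [H, conjTranspose_apply, of_apply, star_mul', RCLike.star_def, map_inv₀,
    Complex.conj_ofReal]
  rw [mul_mul_mul_comm, conj_eexp, ← eexp_add_right, neg_add_eq_sub, ← Complex.ofReal_inv,
    ← Complex.ofReal_mul, ← mul_inv, Real.mul_self_sqrt (Nat.cast_nonneg _), Complex.ofReal_inv,
    Complex.ofReal_natCast]

lemma integrable_conj_eexp (μ : Measure (E d)) [IsFiniteMeasure μ] (t : E d) :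
    Integrable (fun x => conj (eexp t x)) μ :=
  .of_bound (continuous_conj_eexp t).aestronglyMeasurable 1
    (.of_forall fun x => by rw [Complex.norm_conj, norm_eexp])

lemma muHat_smul_measure (μ : Measure (E d)) (c : ℝ≥0∞) (t : E d) :
    muHat (c • μ) t = c.toReal • muHat μ t :=
  integral_smul_measure _ c

lemma muHat_sum_measure {ι : Type*} (s : Finset ι) (ν : ι → Measure (E d))
    [∀ i, IsFiniteMeasure (ν i)] (t : E d) :
    muHat (∑ i ∈ s, ν i) t = ∑ i ∈ s, muHat (ν i) t :=
  integral_finsetSum_measure fun i _ => integrable_conj_eexp (ν i) t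

lemma muHat_map_affine (μ : Measure (E d)) (A : Matrix (Fin d) (Fin d) ℝ) (b t : E d) :
    muHat (μ.map fun x => A.toLpLin 2 2 x + b) t =
      conj (eexp b t) * muHat μ (Aᵀ.toLpLin 2 2 t) := by
  have hcont : Continuous fun x : E d => A.toLpLin 2 2 x + b :=
    (LinearMap.continuous_of_finiteDimensional _).add continuous_const
  rw [muHat, integral_map hcont.aemeasurable (continuous_conj_eexp t).aestronglyMeasurable, muHat,
    ← integral_const_mul]
  congr 1 with x
  rw [eexp_add_right, eexp_toLpLin, map_mul, mul_comm, eexp_comm b]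

lemma muHat_zero (μ : Measure (E d)) [IsProbabilityMeasure μ] : muHat μ 0 = 1 := by
  simp [muHat, eexp]

lemma integral_conj_eexp_mul_eexp (μ : Measure (E d)) (lam lam' : E d) :
    ∫ x, conj (eexp lam x) * eexp lam' x ∂μ = conj (muHat μ (lam' - lam)) := by
  simp_rw [muHat, ← integral_conj, Complex.conj_conj, conj_eexp_mul_eexp]

section

variable {R : Matrix (Fin d) (Fin d) ℝ} {B L : Finset (E d)} {μ : Measure (E d)}

lemma IsSelfSimilarMeasure.muHat_eq_conj_chiB_mul (hμ : IsSelfSimilarMeasure R B μ) (t : E d) :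
    muHat μ t = conj (chiB B t) * muHat μ ((Rᵀ)⁻¹.toLpLin 2 2 t) := by
  have := hμ.1
  have hμeq : μ = (B.card : ℝ≥0∞)⁻¹ • ∑ b ∈ B, μ.map fun x => R⁻¹.toLpLin 2 2 x + b := hμ.2
  conv_lhs => rw [hμeq]
  simp_rw [muHat_smul_measure, muHat_sum_measure, muHat_map_affine, transpose_nonsing_inv]
  simp [chiB, Finset.sum_mul, Finset.mul_sum, mul_assoc]

lemma IsSelfSimilarMeasure.muHat_toLpLin_transpose (hμ : IsSelfSimilarMeasure R B μ)
    (hR : IsUnit R.det) (u : E d) :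
    muHat μ (Rᵀ.toLpLin 2 2 u) = conj (chiB B (Rᵀ.toLpLin 2 2 u)) * muHat μ u := by
  rw [hμ.muHat_eq_conj_chiB_mul, ← LinearMap.comp_apply, ← toLpLin_mul_same,
    nonsing_inv_mul _ (by rwa [det_transpose]), toLpLin_one, LinearMap.id_apply]

lemma eventually_exists_digitSum_eq (h0 : (0 : E d) ∈ L) {lam : E d} (hlam : lam ∈ LSet R L) :
    ∀ᶠ N in atTop, ∃ a : ℕ → E d, (∀ k, a k ∈ L) ∧ lam = digitSum R a N := by
  obtain ⟨n, l, hl, rfl⟩ := hlam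
  refine eventually_atTop.2 ⟨n + 1, fun N hN => ⟨fun k => if k ≤ n then l k else 0,
    fun k => by dsimp only; split_ifs; exacts [hl k, h0], ?_⟩⟩
  rw [digitSum, ← Finset.sum_range_add_sum_Ico _ hN,
    Finset.sum_eq_zero (s := Finset.Ico (n + 1) N) fun k hk => ?_, add_zero]
  · exact Finset.sum_congr rfl fun k hk => by
      rw [if_pos (Nat.lt_succ_iff.mp (Finset.mem_range.mp hk))]; rfl
  · rw [if_neg (by simp at hk; omega), map_zero]

lemma Compatible.inner_transpose_digitSum_mem (hcomp : Compatible R B L) {b : E d} (hb : b ∈ B)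
    {a : ℕ → E d} (ha : ∀ k, a k ∈ L) (n : ℕ) :
    inner ℝ b (Rᵀ.toLpLin 2 2 (digitSum R a n)) ∈ (Int.castAddHom ℝ).range := by
  rw [digitSum, map_sum, inner_sum]
  refine AddSubgroup.sum_mem _ fun k _ => ?_
  obtain ⟨m, hm⟩ := hcomp (k + 1) k.succ_pos b hb (a k) (ha k)
  rw [← Module.End.mul_apply, toLpLin_pow, ← pow_succ', ← toLpLin_pow, ← transpose_pow,
    ← inner_toLpLin_left]
  exact ⟨m, hm.symm⟩

theorem muHat_digitSum_sub_eq_zero (hR : IsUnit R.det) (hcomp : Compatible R B L)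
    (hHad : Hadamard B L) (hμ : IsSelfSimilarMeasure R B μ) :
    ∀ (n : ℕ) {a a' : ℕ → E d}, (∀ k, a k ∈ L) → (∀ k, a' k ∈ L) →
      digitSum R a n ≠ digitSum R a' n → muHat μ (digitSum R a' n - digitSum R a n) = 0
  | 0, _, _, _, _, hne => absurd rfl hne
  | n + 1, a, a', ha, ha', hne => by
    rw [digitSum_succ, digitSum_succ] at hne ⊢
    set u := digitSum R (fun k => a (k + 1)) n
    set u' := digitSum R (fun k => a' (k + 1)) n
    by_cases h0 : a 0 = a' 0
    · have hdiff : a' 0 + Rᵀ.toLpLin 2 2 u' - (a 0 + Rᵀ.toLpLin 2 2 u) =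
          Rᵀ.toLpLin 2 2 (u' - u) := by
        rw [h0, map_sub]; abel
      rw [hdiff, hμ.muHat_toLpLin_transpose hR,
        muHat_digitSum_sub_eq_zero hR hcomp hHad hμ n (fun k => ha _) (fun k => ha' _)
          (fun hu => hne (by rw [h0, show u = u' from hu])), mul_zero]
    · have hdiff : a' 0 + Rᵀ.toLpLin 2 2 u' - (a 0 + Rᵀ.toLpLin 2 2 u) =
          (a' 0 - a 0) + Rᵀ.toLpLin 2 2 (u' - u) := by
        rw [map_sub]; abel
      have hint : ∀ b ∈ B, inner ℝ b (Rᵀ.toLpLin 2 2 (u' - u)) ∈ (Int.castAddHom ℝ).range :=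
        fun b hb => by
          rw [map_sub, inner_sub_right]
          exact sub_mem (hcomp.inner_transpose_digitSum_mem hb (fun k => ha' _) n)
            (hcomp.inner_transpose_digitSum_mem hb (fun k => ha _) n)
      rw [hμ.muHat_eq_conj_chiB_mul, hdiff, chiB_add_of_inner_mem hint,
        hHad.chiB_sub_eq_zero (ha 0) (ha' 0) h0, map_zero, zero_mul]

end

theorem exponentials_orthonormal_general [DecidableEq (E d)]
    (R : Matrix (Fin d) (Fin d) ℝ) (hR : IsExpansive R)
    (B L : Finset (E d))
    (hcomp : Compatible R B L) (hHad : Hadamard B L) (h0 : (0 : E d) ∈ L)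
    (μ : Measure (E d)) (hμ : IsSelfSimilarMeasure R B μ) :
    ∀ lam ∈ LSet R L, ∀ lam' ∈ LSet R L,
      ∫ x, (starRingEnd ℂ) (eexp lam x) * eexp lam' x ∂μ
        = if lam = lam' then 1 else 0 := by
  intro lam hlam lam' hlam'
  have := hμ.1
  rw [integral_conj_eexp_mul_eexp]
  split_ifs with heq
  · rw [heq, sub_self, muHat_zero, map_one]
  · obtain ⟨N, ⟨a, ha, rfl⟩, a', ha', rfl⟩ :=
      ((eventually_exists_digitSum_eq h0 hlam).and (eventually_exists_digitSum_eq h0 hlam')).exists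
    rw [muHat_digitSum_sub_eq_zero (isUnit_det_of_isExpansive hR) hcomp hHad hμ N ha ha' heq,
      map_zero]

/-- For a dual iteration system `(R,B,L)` with compatibility and Hadamard conditions
and `0 ∈ L`, the exponentials `{e_λ : λ ∈ ℒ}` form an orthonormal family in `L²(μ)`. -/
theorem exponentials_orthonormal [DecidableEq (E d)]
    (R : Matrix (Fin d) (Fin d) ℝ) (hR : IsExpansive R)
    (B L : Finset (E d)) (hN : B.card = L.card)
    (hcomp : Compatible R B L) (hHad : Hadamard B L) (h0 : (0 : E d) ∈ L)
    (μ : Measure (E d)) (hμ : IsSelfSimilarMeasure R B μ) :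
    ∀ lam ∈ LSet R L, ∀ lam' ∈ LSet R L,
      ∫ x, (starRingEnd ℂ) (eexp lam x) * eexp lam' x ∂μ
        = if lam = lam' then 1 else 0 :=
  exponentials_orthonormal_general R hR B L hcomp hHad h0 μ hμ
end
end

section
/- Let μ₀ be the probability measure on ℝ satisfying μ₀ = (1/2)(μ₀∘σ_0^{-1} + μ₀∘σ_{1/2}^{-1}) with σ_b(x) = x/4 + b, let L = {0,1}, ℒ = {Σ_{k=0}^n 4^k l_k : l_k ∈ {0,1}}, and Ω = [0,1] + ℒ. Define μ(Δ) = m(Δ ∩ Ω) (m Lebesgue measure) and ν(Δ) = Σ_{k=0}^∞ μ₀(Δ + k). Then Ω tiles ℝ with tiling set −2ℒ: the translates {Ω + t : t ∈ −2ℒ} partition ℝ up to Lebesgue-null sets. -/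
/-!
Every integer `n` has exactly one representation `n = a - 2b` with `a, b ∈ ℒ`. Indeed the last
base-4 digits `r, s ∈ {0, 1}` of `a` and `b` are forced by `n mod 4`, because `r - 2s` runs through
the complete residue system `0, 1, -2, -1`; what remains is the representation of the smaller
integer `(n - r + 2s) / 4`. For a non-integer `x`, the condition `x + 2b ∈ [0, 1] + ℒ` says exactly
`⌊x⌋ + 2b ∈ ℒ`, so the representation of `⌊x⌋` gives the unique translate, and the integers are
a Lebesgue-null set.
-/

open MeasureTheory

noncomputable section

/-- `ℒ = {∑_{k=0}^n 4^k l_k : n ∈ ℕ, l_k ∈ {0,1}}`, the set of (real) nonnegative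
integers whose base-4 expansion uses only the digits 0 and 1. -/
def Lset : Set ℝ :=
  {t | ∃ n : ℕ, ∃ l : ℕ → ℕ, (∀ k, l k ≤ 1) ∧
    t = ∑ k ∈ Finset.range (n + 1), (4 : ℝ) ^ k * (l k : ℝ)}

/-- `Ω = [0,1] + ℒ`. -/
def Omega : Set ℝ := {x | ∃ y ∈ Set.Icc (0 : ℝ) 1, ∃ lam ∈ Lset, x = y + lam}

open Finset

def Lnat : Set ℕ :=
  {n | ∃ m : ℕ, ∃ l : ℕ → ℕ, (∀ k, l k ≤ 1) ∧ n = ∑ k ∈ range (m + 1), 4 ^ k * l k}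

theorem natCast_image_Lnat : ((↑) : ℕ → ℝ) '' Lnat = Lset := by
  ext t
  constructor
  · rintro ⟨_, ⟨m, l, hl, rfl⟩, rfl⟩
    exact ⟨m, l, hl, by push_cast; rfl⟩
  · rintro ⟨m, l, hl, rfl⟩
    exact ⟨_, ⟨m, l, hl, rfl⟩, by push_cast; rfl⟩

theorem sum_range_succ_pow_mul {R : Type*} [CommSemiring R] (b : R) (l : ℕ → R) (m : ℕ) :
    ∑ k ∈ range (m + 1), b ^ k * l k = l 0 + b * ∑ k ∈ range m, b ^ k * l (k + 1) := by
  rw [sum_range_succ', mul_sum, add_comm]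
  simp only [pow_zero, one_mul, pow_succ]
  congr 1
  exact sum_congr rfl fun _ _ => by ring

namespace Lnat

theorem zero_mem : 0 ∈ Lnat :=
  ⟨0, fun _ => 0, fun _ => zero_le_one, by simp⟩

theorem four_mul_add_mem {a r : ℕ} (ha : a ∈ Lnat) (hr : r ≤ 1) : 4 * a + r ∈ Lnat := by
  obtain ⟨m, l, hl, rfl⟩ := ha
  refine ⟨m + 1, Nat.rec r fun k _ => l k, ?_, ?_⟩
  · rintro (_ | k)
    exacts [hr, hl k]
  · rw [sum_range_succ_pow_mul (m := m + 1), add_comm]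
    rfl

theorem exists_eq_four_mul_add {n : ℕ} (hn : n ∈ Lnat) :
    ∃ a ∈ Lnat, ∃ r ≤ 1, n = 4 * a + r := by
  obtain ⟨m, l, hl, rfl⟩ := hn
  refine ⟨_, ?_, l 0, hl 0, by rw [sum_range_succ_pow_mul, add_comm]⟩
  cases m with
  | zero => simpa using zero_mem
  | succ m => exact ⟨m, fun k => l (k + 1), fun k => hl (k + 1), rfl⟩

theorem sub_two_mul_injective {a b c d : ℕ} (ha : a ∈ Lnat) (hb : b ∈ Lnat) (hc : c ∈ Lnat)
    (hd : d ∈ Lnat) (h : (a : ℤ) - 2 * b = c - 2 * d) : a = c ∧ b = d := by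
  induction hN : a + b + c + d using Nat.strong_induction_on generalizing a b c d with
  | _ N ih =>
  obtain ⟨a', ha', _, _, rfl⟩ := exists_eq_four_mul_add ha
  obtain ⟨b', hb', _, _, rfl⟩ := exists_eq_four_mul_add hb
  obtain ⟨c', hc', _, _, rfl⟩ := exists_eq_four_mul_add hc
  obtain ⟨d', hd', _, _, rfl⟩ := exists_eq_four_mul_add hd
  rcases Nat.eq_zero_or_pos N with rfl | hpos
  · omega
  -- the digits `r - 2s ∈ {0, 1, -2, -1}` are distinct modulo 4, so they agree
  have := ih _ (by omega) ha' hb' hc' hd' (by omega) rfl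
  omega

theorem exists_sub_two_mul (n : ℤ) : ∃ a ∈ Lnat, ∃ b ∈ Lnat, n = a - 2 * b := by
  induction hN : n.natAbs using Nat.strong_induction_on generalizing n with
  | _ N ih =>
  rcases eq_or_ne n 0 with rfl | hn
  · exact ⟨0, zero_mem, 0, zero_mem, by simp⟩
  obtain ⟨q, r, hr, s, hs, hq⟩ :
      ∃ q : ℤ, ∃ r : ℕ, r ≤ 1 ∧ ∃ s : ℕ, s ≤ 1 ∧ n = 4 * q + r - 2 * s := by
    rcases (by omega : n % 4 = 0 ∨ n % 4 = 1 ∨ n % 4 = 2 ∨ n % 4 = 3) with h | h | h | h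
    · exact ⟨n / 4, 0, zero_le_one, 0, zero_le_one, by omega⟩
    · exact ⟨n / 4, 1, le_rfl, 0, zero_le_one, by omega⟩
    · exact ⟨n / 4 + 1, 0, zero_le_one, 1, le_rfl, by omega⟩
    · exact ⟨n / 4 + 1, 1, le_rfl, 1, le_rfl, by omega⟩
  obtain ⟨a, ha, b, hb, rfl⟩ := ih q.natAbs (by omega) q rfl
  exact ⟨4 * a + r, four_mul_add_mem ha hr, 4 * b + s, four_mul_add_mem hb hs,
    by push_cast; rw [hq]; ring⟩

end Lnat

theorem mem_Omega_iff {x : ℝ} (hx : Int.fract x ≠ 0) : x ∈ Omega ↔ ∃ a ∈ Lnat, ⌊x⌋ = a := by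
  rw [Omega, ← natCast_image_Lnat]
  constructor
  · rintro ⟨y, ⟨hy0, hy1_le⟩, _, ⟨a, ha, rfl⟩, rfl⟩
    have hy1 : y < 1 := hy1_le.lt_of_ne <| by
      rintro rfl
      exact hx (by simp)
    exact ⟨a, ha, Int.floor_eq_iff.2 ⟨by push_cast; linarith, by push_cast; linarith⟩⟩
  · rintro ⟨a, ha, hfloor⟩
    refine ⟨Int.fract x, ⟨Int.fract_nonneg x, (Int.fract_lt_one x).le⟩,
      (a : ℝ), ⟨a, ha, rfl⟩, ?_⟩
    have := Int.floor_add_fract x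
    rw [hfloor, Int.cast_natCast] at this
    linarith

theorem sub_neg_two_mul_mem_Omega_iff {x : ℝ} (hx : Int.fract x ≠ 0) (b : ℕ) :
    x - -2 * (b : ℝ) ∈ Omega ↔ ∃ a ∈ Lnat, ⌊x⌋ = a - 2 * b := by
  have hshift : x - -2 * (b : ℝ) = x + (2 * b : ℕ) := by push_cast; ring
  rw [hshift, mem_Omega_iff (by rwa [Int.fract_add_natCast]), Int.floor_add_natCast]
  simp only [eq_sub_iff_add_eq, Nat.cast_mul, Nat.cast_ofNat]

theorem ae_fract_ne_zero (μ : Measure ℝ) [NullSingletonClass μ] : ∀ᵐ x ∂μ, Int.fract x ≠ 0 := by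
  filter_upwards [(Set.countable_range ((↑) : ℤ → ℝ)).ae_notMem μ] with x hx
  rwa [Ne, Int.fract_eq_zero_iff]

/-- The set `Ω = [0,1] + ℒ` tiles `ℝ` with tiling set `−2ℒ`: for Lebesgue-a.e.
`x ∈ ℝ` there is a unique `t ∈ −2ℒ` with `x − t ∈ Ω`. -/
theorem omega_tiles_with_minus_two_L :
    ∀ᵐ x : ℝ, ∃! t : ℝ, (∃ lam ∈ Lset, t = -2 * lam) ∧ x - t ∈ Omega := by
  rw [← natCast_image_Lnat]
  filter_upwards [ae_fract_ne_zero volume] with x hx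
  obtain ⟨a, ha, b, hb, hab⟩ := Lnat.exists_sub_two_mul ⌊x⌋
  refine ⟨-2 * b,
    ⟨⟨(b : ℝ), ⟨b, hb, rfl⟩, rfl⟩, (sub_neg_two_mul_mem_Omega_iff hx b).2 ⟨a, ha, hab⟩⟩, ?_⟩
  rintro _ ⟨⟨_, ⟨b', hb', rfl⟩, rfl⟩, hmem⟩
  obtain ⟨a', ha', hab'⟩ := (sub_neg_two_mul_mem_Omega_iff hx b').1 hmem
  rw [(Lnat.sub_two_mul_injective ha' hb' ha hb (hab'.symm.trans hab)).2]
end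
end
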